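/- Let I = [0,a], let f : I → ℝ be superterzatic, let p_{ij} > 0 and r_{ij} > 0 (i = 1,…,k, j = 1,…,n_i) with ∑_{j=1}^{n_i} p_{ij} = ∑_{j=1}^{n_i} r_{ij} = 1 for each i, let x_{ij} ∈ I, and let q_i > 0 with ∑_{i=1}^k q_i = 1. Set M = max over all (j_1,…,j_k) of (p_{1j_1}⋯p_{kj_k})/(r_{1j_1}⋯r_{kj_k}), and x̌ = ∑_{i=1}^k q_i ∑_{j=1}^{n_i} r_{ij} x_{ij}. Then M·J_k(f, r_1,…,r_k, q, x_1,…,x_k) − J_k(f, p_1,…,p_k, q, x_1,…,x_k) ≥ ∑_{j_1,…,j_k} (M r_{1j_1}⋯r_{kj_k} − p_{1j_1}⋯p_{kj_k}) (∑_i q_i x_{ij_i}) [ (∑_i q_i x_{ij_i} − x̌) C(x̌) + f(|∑_i q_i x_{ij_i} − x̌|)/|∑_i q_i x_{ij_i} − x̌| ] + (∑_i q_i ∑_j p_{ij} x_{ij}) [ (∑_i q_i ∑_j (p_{ij} − r_{ij}) x_{ij}) C(x̌) + f(|∑_i q_i ∑_j (p_{ij} − r_{ij}) x_{ij}|)/|∑_i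 q_i ∑_j (p_{ij} − r_{ij}) x_{ij}| ], where C(x̌) is the constant provided by superterzaticity of f at x̌. -/

import Mathlib

/-! Superterzaticity at `x̌` is applied once, to the points `y_j = ∑ᵢ qᵢ x_{i jᵢ}` with weights
`M r_j - p_j` (nonnegative by maximality of `M`) together with the point `ȳ = ∑ᵢ qᵢ ∑ⱼ p_{ij} x_{ij}`
with weight `1`. These weights sum to `M` and have barycentre `x̌`, since the product weights
`p_j = ∏ᵢ p_{i jᵢ}` are probability weights whose `i`-th marginal is `p_i`. Multiplied by `M`, the
superterzatic inequality for the normalized weights is the claim. -/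

open Finset

/-- `SuperterzaticWith a f C` : the function `f` is superterzatic on `I = [0,a]`,
with `C x̄` the constant provided at each point `x̄ ∈ I`. -/
def SuperterzaticWith (a : ℝ) (f : ℝ → ℝ) (C : ℝ → ℝ) : Prop :=
  ∀ xbar ∈ Set.Icc (0 : ℝ) a, ∀ (n : ℕ) (x p : Fin n → ℝ),
    (∀ i, x i ∈ Set.Icc (0 : ℝ) a) → (∀ i, 0 ≤ p i) → (∑ i, p i = 1) →
    (∑ i, p i * x i = xbar) →
    ∑ i, p i * f (x i) - f xbar ≥
      ∑ i, p i * x i * ((x i - xbar) * C xbar + f |x i - xbar| / |x i - xbar|)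

/-- The generalized Jensen functional `J_k`. -/
noncomputable def genJensen (f : ℝ → ℝ) (k : ℕ) (n : Fin k → ℕ)
    (p x : ∀ i : Fin k, Fin (n i) → ℝ) (q : Fin k → ℝ) : ℝ :=
  ∑ j : ∀ i : Fin k, Fin (n i), (∏ i, p i (j i)) * f (∑ i, q i * x i (j i)) -
    f (∑ i, q i * ∑ j, p i j * x i j)

namespace Fintype

variable {ι R : Type*} [Fintype ι] [DecidableEq ι] [CommSemiring R] {κ : ι → Type*}
  [∀ i, Fintype (κ i)] (r : ∀ i, κ i → R)

theorem sum_prod_mul_apply (hr : ∀ i, ∑ l, r i l = 1) (i : ι) (g : κ i → R) :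
    ∑ j : ∀ i, κ i, (∏ m, r m (j m)) * g (j i) = ∑ l, r i l * g l := by
  set w := Function.update r i (fun l => r i l * g l)
  have hw_erase : ∀ m ∈ univ.erase i, w m = r m := fun m hm =>
    Function.update_of_ne (ne_of_mem_erase hm) _ _
  have hw : ∀ j : ∀ i, κ i, ∏ m, w m (j m) = (∏ m, r m (j m)) * g (j i) := by
    intro j
    rw [← mul_prod_erase univ (fun m => w m (j m)) (mem_univ i),
      ← mul_prod_erase univ (fun m => r m (j m)) (mem_univ i),
      Finset.prod_congr rfl fun m hm => congrFun (hw_erase m hm) (j m)]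
    simp only [w, Function.update_self]
    ring
  calc ∑ j : ∀ i, κ i, (∏ m, r m (j m)) * g (j i) = ∑ j : ∀ i, κ i, ∏ m, w m (j m) := by
        simp_rw [hw]
    _ = ∏ m, ∑ l, w m l := (Fintype.prod_sum w).symm
    _ = ∑ l, r i l * g l := by
        rw [← mul_prod_erase univ (fun m => ∑ l, w m l) (mem_univ i),
          Finset.prod_eq_one fun m hm => by rw [hw_erase m hm, hr]]
        simp [w]

theorem sum_prod_eq_one (hr : ∀ i, ∑ l, r i l = 1) :
    ∑ j : ∀ i, κ i, ∏ m, r m (j m) = 1 := by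
  simp [← Fintype.prod_sum, hr]

theorem sum_prod_mul_sum_mul_apply (hr : ∀ i, ∑ l, r i l = 1) (q : ι → R) (x : ∀ i, κ i → R) :
    ∑ j : ∀ i, κ i, (∏ m, r m (j m)) * ∑ i, q i * x i (j i) = ∑ i, q i * ∑ l, r i l * x i l := by
  simp_rw [mul_sum]
  rw [sum_comm]
  refine Finset.sum_congr rfl fun i _ => ?_
  rw [sum_prod_mul_apply r hr i fun l => q i * x i l]
  exact Finset.sum_congr rfl fun l _ => by ring

end Fintype

theorem sum_mul_mem_Icc {ι : Type*} [Fintype ι] {b c : ℝ} {w z : ι → ℝ} (hw : ∀ i, 0 ≤ w i)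
    (hwsum : ∑ i, w i = 1) (hz : ∀ i, z i ∈ Set.Icc b c) : ∑ i, w i * z i ∈ Set.Icc b c := by
  simpa only [smul_eq_mul] using (convex_Icc b c).sum_mem (fun i _ => hw i) hwsum fun i _ => hz i

/-- The bracket of the superterzatic inequality; Lean's `f 0 / 0 = 0` is the paper's convention
`f(0)/0 = 0`. -/
noncomputable def terzaticTerm (f C : ℝ → ℝ) (xbar t : ℝ) : ℝ :=
  (t - xbar) * C xbar + f |t - xbar| / |t - xbar|

namespace SuperterzaticWith

variable {a : ℝ} {f C : ℝ → ℝ} {ι : Type*} [Fintype ι]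

theorem jensen_fintype (hf : SuperterzaticWith a f C) {xbar : ℝ} (hxbar : xbar ∈ Set.Icc (0 : ℝ) a)
    (x p : ι → ℝ) (hx : ∀ i, x i ∈ Set.Icc (0 : ℝ) a) (hp : ∀ i, 0 ≤ p i)
    (hpsum : ∑ i, p i = 1) (hbar : ∑ i, p i * x i = xbar) :
    ∑ i, p i * f (x i) - f xbar ≥ ∑ i, p i * x i * terzaticTerm f C xbar (x i) := by
  let e := (Fintype.equivFin ι).symm
  have h : ∑ i, (p ∘ e) i * f ((x ∘ e) i) - f xbar ≥
      ∑ i, (p ∘ e) i * (x ∘ e) i * terzaticTerm f C xbar ((x ∘ e) i) :=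
    hf xbar hxbar _ (x ∘ e) (p ∘ e) (fun _ => hx _) (fun _ => hp _)
    (by rwa [Function.comp_def, e.sum_comp p])
    (by simpa only [Function.comp_apply, e.sum_comp fun i => p i * x i])
  simpa only [Function.comp_apply, e.sum_comp fun i => p i * f (x i),
    e.sum_comp fun i => p i * x i * terzaticTerm f C xbar (x i)] using h

theorem jensen_fintype_scaled (hf : SuperterzaticWith a f C) {xbar c : ℝ}
    (hxbar : xbar ∈ Set.Icc (0 : ℝ) a) (hc : 0 < c) (x w : ι → ℝ)
    (hx : ∀ i, x i ∈ Set.Icc (0 : ℝ) a) (hw : ∀ i, 0 ≤ w i)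
    (hwsum : ∑ i, w i = c) (hbar : ∑ i, w i * x i = c * xbar) :
    ∑ i, w i * f (x i) - c * f xbar ≥ ∑ i, w i * x i * terzaticTerm f C xbar (x i) := by
  have h := hf.jensen_fintype hxbar x (fun i => w i / c) hx (fun i => div_nonneg (hw i) hc.le)
    (by rw [← sum_div, hwsum, div_self hc.ne'])
    (by simp_rw [div_mul_eq_mul_div, ← sum_div, hbar, mul_div_cancel_left₀ _ hc.ne'])
  have hscale : ∀ g : ι → ℝ, c * ∑ i, w i / c * g i = ∑ i, w i * g i := fun g => by
    rw [mul_sum]; exact Finset.sum_congr rfl fun i _ => by field_simp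
  calc ∑ i, w i * f (x i) - c * f xbar = c * (∑ i, w i / c * f (x i) - f xbar) := by
        rw [mul_sub, hscale]
    _ ≥ c * ∑ i, w i / c * x i * terzaticTerm f C xbar (x i) :=
        mul_le_mul_of_nonneg_left h hc.le
    _ = ∑ i, w i * x i * terzaticTerm f C xbar (x i) := by simp_rw [mul_assoc, hscale]

theorem smul_jensen_sub_jensen_ge (hf : SuperterzaticWith a f C) (P R y : ι → ℝ)
    (hP : ∀ j, 0 ≤ P j) (hPsum : ∑ j, P j = 1) (hR : ∀ j, 0 ≤ R j) (hRsum : ∑ j, R j = 1)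
    (hy : ∀ j, y j ∈ Set.Icc (0 : ℝ) a) {M : ℝ} (hM : ∀ j, P j ≤ M * R j)
    {xbar ybar : ℝ} (hxbar : ∑ j, R j * y j = xbar) (hybar : ∑ j, P j * y j = ybar) :
    M * (∑ j, R j * f (y j) - f xbar) - (∑ j, P j * f (y j) - f ybar) ≥
      ∑ j, (M * R j - P j) * y j * terzaticTerm f C xbar (y j) +
        ybar * terzaticTerm f C xbar ybar := by
  have hM_pos : 0 < M := zero_lt_one.trans_le <|
    calc 1 = ∑ j, P j := hPsum.symm
      _ ≤ ∑ j, M * R j := sum_le_sum fun j _ => hM j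
      _ = M := by rw [← mul_sum, hRsum, mul_one]
  have hxbar_mem : xbar ∈ Set.Icc (0 : ℝ) a := hxbar ▸ sum_mul_mem_Icc hR hRsum hy
  have hybar_mem : ybar ∈ Set.Icc (0 : ℝ) a := hybar ▸ sum_mul_mem_Icc hP hPsum hy
  have hdiff : ∀ g : ι → ℝ, ∑ j, (M * R j - P j) * g j = M * ∑ j, R j * g j - ∑ j, P j * g j :=
    fun g => by simp only [sub_mul, mul_assoc, sum_sub_distrib, ← mul_sum]
  have h := hf.jensen_fintype_scaled hxbar_mem hM_pos (fun o : Option ι => o.elim ybar y)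
    (fun o : Option ι => o.elim 1 fun j => M * R j - P j)
    (fun | none => hybar_mem | some j => hy j)
    (fun | none => zero_le_one | some j => sub_nonneg.2 (hM j))
    (by simp only [Fintype.sum_option, Option.elim, sum_sub_distrib, ← mul_sum, hRsum, hPsum]; ring)
    (by simp only [Fintype.sum_option, Option.elim, one_mul, hdiff, hxbar, hybar]; ring)
  simp only [Fintype.sum_option, Option.elim, one_mul, hdiff] at h
  linarith

end SuperterzaticWith

/-- Theorem 6, second inequality. -/
theorem max_smul_genJensen_sub_ge (a : ℝ) (f C : ℝ → ℝ)
    (hf : SuperterzaticWith a f C)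
    (k : ℕ) (n : Fin k → ℕ) (p r x : ∀ i : Fin k, Fin (n i) → ℝ) (q : Fin k → ℝ)
    (hp : ∀ i j, 0 < p i j) (hpsum : ∀ i, ∑ j, p i j = 1)
    (hr : ∀ i j, 0 < r i j) (hrsum : ∀ i, ∑ j, r i j = 1)
    (hx : ∀ i j, x i j ∈ Set.Icc (0 : ℝ) a)
    (hq : ∀ i, 0 < q i) (hqsum : ∑ i, q i = 1)
    (M : ℝ)
    (hM : IsGreatest {v : ℝ | ∃ j : ∀ i : Fin k, Fin (n i),
      v = (∏ i, p i (j i)) / (∏ i, r i (j i))} M)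
    (xcheck : ℝ) (hxcheck : xcheck = ∑ i, q i * ∑ j, r i j * x i j) :
    M * genJensen f k n r x q - genJensen f k n p x q ≥
      (∑ j : ∀ i : Fin k, Fin (n i),
        (M * (∏ i, r i (j i)) - ∏ i, p i (j i)) * (∑ i, q i * x i (j i)) *
          ((∑ i, q i * x i (j i) - xcheck) * C xcheck +
            f |∑ i, q i * x i (j i) - xcheck| / |∑ i, q i * x i (j i) - xcheck|))
      + (∑ i, q i * ∑ j, p i j * x i j) *
          ((∑ i, q i * ∑ j, (p i j - r i j) * x i j) * C xcheck +
            f |∑ i, q i * ∑ j, (p i j - r i j) * x i j| /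
              |∑ i, q i * ∑ j, (p i j - r i j) * x i j|) := by
  have hr_prod : ∀ j : ∀ i, Fin (n i), 0 < ∏ i, r i (j i) := fun j =>
    prod_pos fun i _ => hr i (j i)
  have hM_ratio : ∀ j : ∀ i, Fin (n i), ∏ i, p i (j i) ≤ M * ∏ i, r i (j i) := fun j =>
    (div_le_iff₀ (hr_prod j)).1 (hM.2 ⟨j, rfl⟩)
  have hdiff : ∑ i, q i * ∑ j, (p i j - r i j) * x i j =
      ∑ i, q i * ∑ j, p i j * x i j - xcheck := by
    simp only [hxcheck, sub_mul, sum_sub_distrib, mul_sub]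
  have h := hf.smul_jensen_sub_jensen_ge (fun j => ∏ i, p i (j i)) (fun j => ∏ i, r i (j i))
    (fun j => ∑ i, q i * x i (j i)) (fun j => prod_nonneg fun i _ => (hp i (j i)).le)
    (Fintype.sum_prod_eq_one p hpsum) (fun j => (hr_prod j).le)
    (Fintype.sum_prod_eq_one r hrsum)
    (fun j => sum_mul_mem_Icc (fun i => (hq i).le) hqsum fun i => hx i (j i)) hM_ratio
    ((Fintype.sum_prod_mul_sum_mul_apply r hrsum q x).trans hxcheck.symm)
    (Fintype.sum_prod_mul_sum_mul_apply p hpsum q x)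
  rw [hdiff, genJensen, genJensen, ← hxcheck]
  exact h
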